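/- arXiv:1210.4025 — 7 statements merged into one kernel-verified Lean document; each statement's English description precedes it below -/
import Mathlib

section
/- Let G = ℤ/Nℤ with dual ĝ, let S ⊆ G with |S| = s, let x : G → ℂ be supported on S, and let Ω ⊆ ĝ. If for every nonzero z : G → ℂ whose Fourier transform vanishes on Ω one has ∑_{t ∉ S} |z(t)| > ∑_{t ∈ S} |z(t)|, then for every z ≠ 0 with ẑ|_Ω = 0 one has ∑_{t ∈ S} |x(t)+z(t)| + ∑_{t ∉ S} |z(t)| > ∑_{t ∈ S} |x(t)|; in particular x is the unique ℓ¹-norm minimizer among all y : G → ℂ with ŷ|_Ω = x̂|_Ω. -/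
open Finset Complex

/-- Discrete Fourier transform on `ℤ/Nℤ`:
`ẑ(ω) = N^{-1/2} ∑_{t} z(t) e^{-2πiωt/N}`. -/
noncomputable def dft (N : ℕ) [NeZero N] (z : ZMod N → ℂ) (ω : ZMod N) : ℂ :=
  (N : ℂ) ^ (-(1:ℂ)/2) *
    ∑ t : ZMod N, z t * Complex.exp (-2 * Real.pi * Complex.I * (ω.val * t.val) / N)

/-
A solution `x + z` of the same measurements has `ℓ¹` mass at least `‖x‖_S - ‖z‖_S` on `S`
and `‖z‖_{Sᶜ}` off `S`, so the null space property `‖z‖_S < ‖z‖_{Sᶜ}` makes it strictly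
heavier than `x` whenever `x` is supported on `S`.
-/

section NullSpaceProperty

variable {ι E : Type*} [Fintype ι] [DecidableEq ι] [SeminormedAddCommGroup E]

theorem sum_norm_lt_sum_norm_add_of_nullSpaceProperty {S : Finset ι} (x z : ι → E)
    (hz : ∑ t ∈ S, ‖z t‖ < ∑ t ∈ Sᶜ, ‖z t‖) :
    ∑ t ∈ S, ‖x t‖ < ∑ t ∈ S, ‖x t + z t‖ + ∑ t ∈ Sᶜ, ‖z t‖ := by
  have hS : ∑ t ∈ S, ‖x t‖ - ∑ t ∈ S, ‖z t‖ ≤ ∑ t ∈ S, ‖x t + z t‖ := by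
    rw [← sum_sub_distrib]
    exact sum_le_sum fun t _ => by simpa using norm_sub_norm_le (x t) (-z t)
  linarith

theorem sum_norm_add_eq_of_support_subset {S : Finset ι} {x : ι → E} (z : ι → E)
    (hx : ∀ t, t ∉ S → x t = 0) :
    ∑ t, ‖x t + z t‖ = ∑ t ∈ S, ‖x t + z t‖ + ∑ t ∈ Sᶜ, ‖z t‖ := by
  rw [← sum_add_sum_compl S]
  congr 1
  exact sum_congr rfl fun t ht => by rw [hx t (mem_compl.mp ht), zero_add]

end NullSpaceProperty

theorem dft_sub (N : ℕ) [NeZero N] (y x : ZMod N → ℂ) (ω : ZMod N) :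
    dft N (y - x) ω = dft N y ω - dft N x ω := by
  simp only [dft, Pi.sub_apply, sub_mul, sum_sub_distrib, mul_sub]

theorem stmt0_general (N : ℕ) [NeZero N] (S : Finset (ZMod N))
    (x : ZMod N → ℂ) (hx : ∀ t, t ∉ S → x t = 0) (Ω : Finset (ZMod N))
    (hii : ∀ z : ZMod N → ℂ, z ≠ 0 → (∀ ω ∈ Ω, dft N z ω = 0) →
      ∑ t ∈ Sᶜ, ‖z t‖ > ∑ t ∈ S, ‖z t‖) :
    (∀ z : ZMod N → ℂ, z ≠ 0 → (∀ ω ∈ Ω, dft N z ω = 0) →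
      ∑ t ∈ S, ‖x t + z t‖ + ∑ t ∈ Sᶜ, ‖z t‖
        > ∑ t ∈ S, ‖x t‖) ∧
    (∀ y : ZMod N → ℂ, (∀ ω ∈ Ω, dft N y ω = dft N x ω) → y ≠ x →
      ∑ t : ZMod N, ‖y t‖ > ∑ t : ZMod N, ‖x t‖) := by
  have recovery : ∀ z : ZMod N → ℂ, z ≠ 0 → (∀ ω ∈ Ω, dft N z ω = 0) →
      ∑ t ∈ S, ‖x t + z t‖ + ∑ t ∈ Sᶜ, ‖z t‖ > ∑ t ∈ S, ‖x t‖ :=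
    fun z hz hzΩ => sum_norm_lt_sum_norm_add_of_nullSpaceProperty x z (hii z hz hzΩ)
  refine ⟨recovery, fun y hy hyx => ?_⟩
  have hker : ∀ ω ∈ Ω, dft N (y - x) ω = 0 := fun ω hω => by
    rw [dft_sub, hy ω hω, sub_self]
  have hx_norm : ∑ t, ‖x t‖ = ∑ t ∈ S, ‖x t‖ :=
    (sum_subset (subset_univ S) fun t _ ht => by rw [hx t ht, norm_zero]).symm
  calc ∑ t, ‖y t‖ = ∑ t, ‖x t + (y - x) t‖ := by simp
    _ = ∑ t ∈ S, ‖x t + (y - x) t‖ + ∑ t ∈ Sᶜ, ‖(y - x) t‖ :=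
      sum_norm_add_eq_of_support_subset (y - x) hx
    _ > ∑ t, ‖x t‖ := hx_norm ▸ recovery (y - x) (sub_ne_zero.mpr hyx) hker

/-- (ii) ⇒ (i): if every nonzero `z` with `ẑ|_Ω = 0` satisfies
`∑_{G∖S}|z| > ∑_S|z|`, then for every such `z` one has
`∑_S |x+z| + ∑_{G∖S}|z| > ∑_S |x|`, and `x` is the unique `ℓ¹`-minimizer
among `y` with `ŷ|_Ω = x̂|_Ω`. -/
theorem stmt0 (N : ℕ) [NeZero N] (S : Finset (ZMod N)) (s : ℕ) (hS : S.card = s)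
    (x : ZMod N → ℂ) (hx : ∀ t, t ∉ S → x t = 0) (Ω : Finset (ZMod N))
    (hii : ∀ z : ZMod N → ℂ, z ≠ 0 → (∀ ω ∈ Ω, dft N z ω = 0) →
      ∑ t ∈ Sᶜ, ‖z t‖ > ∑ t ∈ S, ‖z t‖) :
    (∀ z : ZMod N → ℂ, z ≠ 0 → (∀ ω ∈ Ω, dft N z ω = 0) →
      ∑ t ∈ S, ‖x t + z t‖ + ∑ t ∈ Sᶜ, ‖z t‖
        > ∑ t ∈ S, ‖x t‖) ∧
    (∀ y : ZMod N → ℂ, (∀ ω ∈ Ω, dft N y ω = dft N x ω) → y ≠ x →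
      ∑ t : ZMod N, ‖y t‖ > ∑ t : ZMod N, ‖x t‖) :=
  stmt0_general N S x hx Ω hii
end

section
/- Let G = ℤ/Nℤ, S ⊆ G, Ω ⊆ dual of G, and α ∈ (0,1). Suppose for every λ : S → ℂ with |λ(t)| = 1 for all t ∈ S, there exists p : G → ℂ whose Fourier transform is supported in Ω with |p(t) − λ(t)| < α for t ∈ S and |p(t)| < 1 − α for t ∉ S. Then every nonzero z : G → ℂ with ẑ|_Ω = 0 satisfies ∑_{t ∈ S} |z(t)| < ∑_{t ∉ S} |z(t)|. -/
/-!
Take `λ` to be the phase of `z` on `S` and let `p` be the interpolant given by the hypothesis.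
By Parseval, `∑ p · conj z = 0`, because `p̂` and `ẑ` have disjoint supports. Hence
`∑_S |z| = ∑_S (λ - p) conj z - ∑_{G∖S} p conj z ≤ α ∑_S |z| + (1 - α) ∑_{G∖S} |z|`,
strictly since `z ≠ 0`, and this rearranges to `∑_S |z| < ∑_{G∖S} |z|` as `α < 1`.
-/

open Finset Complex

open scoped ZMod ComplexConjugate

namespace ZMod

variable {N : ℕ} [NeZero N]

theorem sum_mul_conj_eq_inv_mul_sum_dft_mul_conj (p z : ZMod N → ℂ) :
    ∑ t, p t * conj (z t) = (N : ℂ)⁻¹ * ∑ ω, 𝓕 p ω * conj (𝓕 z ω) := by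
  conv_lhs => rw [← (𝓕).symm_apply_apply p]
  simp only [invDFT_apply, dft_apply z, smul_eq_mul, map_sum, map_mul, ← AddChar.map_neg_eq_conj,
    neg_neg, Finset.mul_sum, Finset.sum_mul]
  rw [Finset.sum_comm]
  refine Finset.sum_congr rfl fun ω _ => Finset.sum_congr rfl fun t _ => ?_
  rw [mul_comm t ω]
  ring

theorem stdAddChar_neg_mul (ω t : ZMod N) :
    stdAddChar (-(t * ω)) = exp (-2 * Real.pi * I * (ω.val * t.val) / N) := by
  have : -(t * ω) = ((-(ω.val * t.val : ℕ) : ℤ) : ZMod N) := by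
    push_cast; rw [natCast_zmod_val, natCast_zmod_val, mul_comm]
  rw [this, stdAddChar_coe]
  push_cast
  ring_nf

end ZMod

theorem dft_eq_cpow_mul_zmodDFT (N : ℕ) [NeZero N] (z : ZMod N → ℂ) (ω : ZMod N) :
    dft N z ω = (N : ℂ) ^ (-(1:ℂ)/2) * 𝓕 z ω := by
  simp only [dft, ZMod.dft_apply, ZMod.stdAddChar_neg_mul, smul_eq_mul, mul_comm]

theorem dft_eq_zero_iff {N : ℕ} [NeZero N] {z : ZMod N → ℂ} {ω : ZMod N} :
    dft N z ω = 0 ↔ 𝓕 z ω = 0 := by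
  rw [dft_eq_cpow_mul_zmodDFT, mul_eq_zero, cpow_eq_zero_iff, Nat.cast_eq_zero]
  simp [NeZero.ne N]

theorem sum_mul_conj_eq_zero_of_dft (N : ℕ) [NeZero N] {Ω : Finset (ZMod N)} {p z : ZMod N → ℂ}
    (hp : ∀ ω, ω ∉ Ω → dft N p ω = 0) (hz : ∀ ω ∈ Ω, dft N z ω = 0) :
    ∑ t, p t * conj (z t) = 0 := by
  rw [ZMod.sum_mul_conj_eq_inv_mul_sum_dft_mul_conj, sum_eq_zero, mul_zero]
  intro ω _
  by_cases hω : ω ∈ Ω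
  · rw [dft_eq_zero_iff.mp (hz ω hω), map_zero, mul_zero]
  · rw [dft_eq_zero_iff.mp (hp ω hω), zero_mul]

noncomputable def phase (z : ℂ) : ℂ := if z = 0 then 1 else z / ‖z‖

theorem norm_phase (z : ℂ) : ‖phase z‖ = 1 := by
  unfold phase
  split_ifs with hz
  · exact norm_one
  · rw [norm_div, norm_real, norm_norm, div_self (norm_ne_zero_iff.mpr hz)]

theorem phase_mul_conj (z : ℂ) : phase z * conj z = ‖z‖ := by
  unfold phase
  split_ifs with hz
  · simp [hz]
  · have : (‖z‖ : ℂ) ≠ 0 := ofReal_ne_zero.mpr (norm_ne_zero_iff.mpr hz)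
    rw [div_mul_eq_mul_div, mul_conj', sq, mul_div_assoc, div_self this, mul_one]

theorem norm_sum_mul_conj_lt {G : Type*} [Fintype G] {q z : G → ℂ} {b : G → ℝ} (hz : z ≠ 0)
    (hq : ∀ t, ‖q t‖ < b t) : ‖∑ t, q t * conj (z t)‖ < ∑ t, b t * ‖z t‖ := by
  obtain ⟨t₀, ht₀⟩ := Function.ne_iff.mp hz
  calc ‖∑ t, q t * conj (z t)‖ ≤ ∑ t, ‖q t‖ * ‖z t‖ := by
        simpa only [norm_mul, RCLike.norm_conj] using norm_sum_le univ fun t => q t * conj (z t)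
    _ < ∑ t, b t * ‖z t‖ :=
        sum_lt_sum (fun t _ => by gcongr; exact (hq t).le)
          ⟨t₀, mem_univ _, by gcongr; exact hq t₀⟩

theorem sum_norm_lt_sum_compl_norm {G : Type*} [Fintype G] [DecidableEq G] {S : Finset G}
    {α : ℝ} (hα : α < 1) {z p : G → ℂ} (hz : z ≠ 0) (horth : ∑ t, p t * conj (z t) = 0)
    (hS : ∀ t ∈ S, ‖p t - phase (z t)‖ < α) (hSc : ∀ t ∉ S, ‖p t‖ < 1 - α) :
    ∑ t ∈ S, ‖z t‖ < ∑ t ∈ Sᶜ, ‖z t‖ := by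
  set q : G → ℂ := fun t => (if t ∈ S then phase (z t) else 0) - p t
  set b : G → ℝ := fun t => if t ∈ S then α else 1 - α
  have hq : ∀ t, ‖q t‖ < b t := by
    intro t
    by_cases ht : t ∈ S
    · simpa [q, b, ht, norm_sub_rev] using hS t ht
    · simpa [q, b, ht] using hSc t ht
  have hA : ((∑ t ∈ S, ‖z t‖ : ℝ) : ℂ) = ∑ t, q t * conj (z t) := by
    simp only [q, sub_mul, sum_sub_distrib, horth, sub_zero, ite_mul, zero_mul, sum_ite_mem,
      univ_inter, phase_mul_conj, ofReal_sum]
  have hb : ∑ t, b t * ‖z t‖ = α * ∑ t ∈ S, ‖z t‖ + (1 - α) * ∑ t ∈ Sᶜ, ‖z t‖ := by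
    rw [← sum_add_sum_compl S, mul_sum, mul_sum]
    congr 1 <;> refine sum_congr rfl fun t ht => ?_
    · simp [b, ht]
    · simp [b, mem_compl.mp ht]
  have key := norm_sum_mul_conj_lt hz hq
  rw [← hA, norm_real, Real.norm_of_nonneg (sum_nonneg fun _ _ => norm_nonneg _), hb] at key
  have : (1 - α) * ∑ t ∈ S, ‖z t‖ < (1 - α) * ∑ t ∈ Sᶜ, ‖z t‖ := by linarith
  exact lt_of_mul_lt_mul_left this (by linarith)

/-- (iii) ⇒ (ii): if every unimodular `λ` on `S` admits an interpolating `p`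
with spectrum in `Ω`, `|p − λ| < α` on `S` and `|p| < 1 − α` off `S`, then every
nonzero `z` with `ẑ|_Ω = 0` satisfies `∑_S |z| < ∑_{G∖S} |z|`. -/
theorem stmt1 (N : ℕ) [NeZero N] (S : Finset (ZMod N)) (Ω : Finset (ZMod N))
    (α : ℝ) (hα : α ∈ Set.Ioo (0:ℝ) 1)
    (hiii : ∀ l : ZMod N → ℂ, (∀ t ∈ S, ‖l t‖ = 1) →
      ∃ p : ZMod N → ℂ, (∀ ω, ω ∉ Ω → dft N p ω = 0) ∧
        (∀ t ∈ S, ‖p t - l t‖ < α) ∧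
        (∀ t, t ∉ S → ‖p t‖ < 1 - α)) :
    ∀ z : ZMod N → ℂ, z ≠ 0 → (∀ ω ∈ Ω, dft N z ω = 0) →
      ∑ t ∈ S, ‖z t‖ < ∑ t ∈ Sᶜ, ‖z t‖ := by
  intro z hz hzΩ
  obtain ⟨p, hpΩ, hpS, hpSc⟩ := hiii (fun t => phase (z t)) fun t _ => norm_phase (z t)
  exact sum_norm_lt_sum_compl_norm hα.2 hz (sum_mul_conj_eq_zero_of_dft N hpΩ hzΩ) hpS hpSc
end

section
/- Let N not be divisible by 2 or 3, t ≠ 0 in ℤ/Nℤ, φ ∈ ℝ, Bₙ = cos(2πnt/N − φ), and M the average over n ∈ ℤ/Nℤ. Then for every u > 0, M(e^{uBₙ}) ≤ 1 + u²/4 + ∑_{k ≥ 4} uᵏ/k!. -/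
/-!
Since `|u Bₙ| ≤ u`, the exponential is bounded pointwise by its cubic Taylor polynomial at `u Bₙ`
plus the tail `∑_{k ≥ 4} uᵏ/k!`. Averaging over `n`, the linear and cubic terms vanish and the
quadratic one contributes `u²/4`: writing `cos² θ` and `cos³ θ` through `cos 2θ` and `cos 3θ`,
these moments reduce to sums of the nontrivial additive characters `n ↦ e(knt/N)`, `k = 1, 2, 3`,
which vanish because `kt ≠ 0` when `N` is prime to `6`.
-/

open Finset

open Real
open scoped BigOperators

section

open scoped Nat

theorem Real.exp_le_cubic_taylor_add_tail {x r : ℝ} (hx : |x| ≤ r) :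
    exp x ≤ 1 + x + x ^ 2 / 2 + x ^ 3 / 6 + ∑' k : ℕ, r ^ (k + 4) / (k + 4)! := by
  have hsum (y : ℝ) : Summable fun k : ℕ => y ^ (k + 4) / (k + 4)! :=
    (summable_nat_add_iff 4).2 (summable_pow_div_factorial y)
  have hpow (n : ℕ) : x ^ n ≤ r ^ n :=
    calc x ^ n ≤ |x| ^ n := abs_pow x n ▸ le_abs_self _
      _ ≤ r ^ n := pow_le_pow_left₀ (abs_nonneg x) hx n
  have htail : ∑' k : ℕ, x ^ (k + 4) / (k + 4)! ≤ ∑' k : ℕ, r ^ (k + 4) / (k + 4)! :=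
    (hsum x).tsum_le_tsum (fun k => div_le_div_of_nonneg_right (hpow _) (by positivity)) (hsum r)
  have hcubic : ∑ k ∈ range 4, x ^ k / k ! = 1 + x + x ^ 2 / 2 + x ^ 3 / 6 := by
    norm_num [sum_range_succ, Nat.factorial]
  rw [exp_eq_exp_ℝ, NormedSpace.exp_eq_tsum_div]
  beta_reduce
  rw [← (summable_pow_div_factorial x).sum_add_tsum_nat_add 4, hcubic]
  linarith

theorem expect_exp_le_of_moments {ι : Type*} [Fintype ι] [Nonempty ι] {B : ι → ℝ}
    (hB : ∀ i, |B i| ≤ 1) (h1 : 𝔼 i, B i = 0) (h2 : 𝔼 i, B i ^ 2 = 1 / 2)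
    (h3 : 𝔼 i, B i ^ 3 = 0) {u : ℝ} (hu : 0 ≤ u) :
    𝔼 i, exp (u * B i) ≤ 1 + u ^ 2 / 4 + ∑' k : ℕ, u ^ (k + 4) / (k + 4)! := by
  set T := ∑' k : ℕ, u ^ (k + 4) / (k + 4)!
  have hpointwise (i : ι) :
      exp (u * B i) ≤ (1 + T) + u * B i + u ^ 2 / 2 * B i ^ 2 + u ^ 3 / 6 * B i ^ 3 := by
    have hx : |u * B i| ≤ u := by
      rw [abs_mul, abs_of_nonneg hu]
      exact mul_le_of_le_one_right hu (hB i)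
    linarith [exp_le_cubic_taylor_add_tail hx]
  calc 𝔼 i, exp (u * B i)
      ≤ 𝔼 i, ((1 + T) + u * B i + u ^ 2 / 2 * B i ^ 2 + u ^ 3 / 6 * B i ^ 3) :=
        expect_le_expect fun i _ => hpointwise i
    _ = 1 + u ^ 2 / 4 + T := by
        simp only [expect_add_distrib, ← mul_expect, Fintype.expect_const, h1, h2, h3]
        ring

end

theorem ZMod.natCast_prime_mul_ne_zero {N p : ℕ} (hp : p.Prime) (hpN : ¬ p ∣ N) {t : ZMod N}
    (ht : t ≠ 0) : (p : ZMod N) * t ≠ 0 := by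
  rwa [Ne, ((ZMod.isUnit_prime_iff_not_dvd hp).2 hpN).mul_right_eq_zero]

namespace ZMod

variable {N : ℕ} [NeZero N] {a : ℕ} (c : ℝ)

theorem cos_eq_re_stdAddChar (n : ZMod N) :
    cos (2 * π * n.val * a / N - c)
      = (Complex.exp (-c * Complex.I) * stdAddChar (n * (a : ZMod N))).re := by
  have hcast : n * (a : ZMod N) = ((n.val * a : ℕ) : ZMod N) := by
    rw [Nat.cast_mul, natCast_zmod_val]
  rw [hcast, stdAddChar_apply, toCircle_natCast, ← Complex.exp_add,
    ← Complex.exp_ofReal_mul_I_re]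
  congr 2
  push_cast
  ring

theorem expect_cos_eq_zero (ha : (a : ZMod N) ≠ 0) :
    𝔼 n : ZMod N, cos (2 * π * n.val * a / N - c) = 0 := by
  rw [Fintype.expect_eq_sum_div_card, div_eq_zero_iff]
  left
  simp only [cos_eq_re_stdAddChar c, ← Complex.re_sum, ← mul_sum,
    AddChar.sum_mulShift _ (isPrimitive_stdAddChar N), if_neg ha]
  simp

theorem expect_cos_sq (ha : (2 * a : ZMod N) ≠ 0) :
    𝔼 n : ZMod N, cos (2 * π * n.val * a / N - c) ^ 2 = 1 / 2 := by
  have hdouble (n : ZMod N) : cos (2 * π * n.val * a / N - c) ^ 2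
      = 1 / 2 + cos (2 * π * n.val * (2 * a : ℕ) / N - 2 * c) / 2 := by
    rw [cos_sq]
    push_cast
    ring_nf
  simp only [hdouble, expect_add_distrib, ← expect_div, Fintype.expect_const]
  rw [expect_cos_eq_zero _ (by exact_mod_cast ha)]
  ring

theorem expect_cos_pow_three (ha : (a : ZMod N) ≠ 0) (ha3 : (3 * a : ZMod N) ≠ 0) :
    𝔼 n : ZMod N, cos (2 * π * n.val * a / N - c) ^ 3 = 0 := by
  have htriple (n : ZMod N) : cos (2 * π * n.val * a / N - c) ^ 3
      = cos (2 * π * n.val * (3 * a : ℕ) / N - 3 * c) / 4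
        + 3 / 4 * cos (2 * π * n.val * a / N - c) := by
    push_cast
    rw [show 2 * π * n.val * (3 * a) / N - 3 * c = 3 * (2 * π * n.val * a / N - c) by ring,
      cos_three_mul]
    ring
  simp only [htriple, expect_add_distrib, ← expect_div, ← mul_expect]
  rw [expect_cos_eq_zero _ (by exact_mod_cast ha3), expect_cos_eq_zero _ ha]
  ring

end ZMod

/-- Exponential moment bound: under the hypotheses of the cosine moment estimates,
`M(e^{uBₙ}) ≤ 1 + u²/4 + ∑_{k ≥ 4} uᵏ/k!` for every `u > 0`. -/
theorem stmt11 (N : ℕ) [NeZero N] (hN2 : ¬ (2 ∣ N)) (hN3 : ¬ (3 ∣ N))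
    (t : ZMod N) (ht : t ≠ 0) (φ : ℝ) (u : ℝ) (hu : 0 < u) :
    ((1 : ℝ) / N) * ∑ n : ZMod N,
        Real.exp (u * Real.cos (2 * Real.pi * n.val * t.val / N - φ))
      ≤ 1 + u ^ 2 / 4 + ∑' k : ℕ, u ^ (k + 4) / (Nat.factorial (k + 4)) := by
  have ht1 : ((t.val : ℕ) : ZMod N) ≠ 0 := by rwa [ZMod.natCast_zmod_val]
  have ht2 : (2 * t.val : ZMod N) ≠ 0 := by
    rw [ZMod.natCast_zmod_val]
    exact_mod_cast ZMod.natCast_prime_mul_ne_zero Nat.prime_two hN2 ht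
  have ht3 : (3 * t.val : ZMod N) ≠ 0 := by
    rw [ZMod.natCast_zmod_val]
    exact_mod_cast ZMod.natCast_prime_mul_ne_zero Nat.prime_three hN3 ht
  calc ((1 : ℝ) / N) * ∑ n : ZMod N, exp (u * cos (2 * π * n.val * t.val / N - φ))
      = 𝔼 n : ZMod N, exp (u * cos (2 * π * n.val * t.val / N - φ)) := by
        rw [Fintype.expect_eq_sum_div_card, ZMod.card, one_div_mul_eq_div]
    _ ≤ _ := expect_exp_le_of_moments (fun n => abs_cos_le_one _)
        (ZMod.expect_cos_eq_zero φ ht1) (ZMod.expect_cos_sq φ ht2)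
        (ZMod.expect_cos_pow_three φ ht1 ht3) hu.le
end

section
/- For every real a ∈ (0,1] and integer s ≥ 1, setting u = (a/s)·(1 + a²/s²)^{−1}, one has −au/(2s) + a²u²/(8s²) + u²/4 + ∑_{k ≥ 4} uᵏ/k! < −(a²/(4s²))·(1 + a²/s²)^{−1}. -/
/-!
With `t = a/s` one has `u (1 + t²) = t`, so the left-hand side minus the right-hand side collapses
to `∑_{k≥4} uᵏ/k! - t²u²/8`. Since `u ≤ 1/2`, the tail is dominated by a geometric series,
`∑_{k≥4} uᵏ/k! ≤ u⁴/(24 (1 - u)) ≤ u⁴/12`, and `u⁴/12 < t²u²/8` because `u < t`.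
-/

open Nat

theorem tsum_pow_add_div_factorial_le {u : ℝ} (hu0 : 0 ≤ u) (hu1 : u < 1) (n : ℕ) :
    ∑' k : ℕ, u ^ (k + n) / (k + n)! ≤ u ^ n / n ! * (1 - u)⁻¹ := by
  have hterm (k : ℕ) : u ^ (k + n) / (k + n)! ≤ u ^ n / n ! * u ^ k := by
    rw [div_mul_eq_mul_div, ← pow_add, add_comm n k]
    gcongr
    exact le_add_self
  have hgeom := (summable_geometric_of_lt_one hu0 hu1).mul_left (u ^ n / n !)
  calc ∑' k : ℕ, u ^ (k + n) / (k + n)!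
      ≤ ∑' k : ℕ, u ^ n / n ! * u ^ k :=
        (hgeom.of_nonneg_of_le (fun _ => by positivity) hterm).tsum_le_tsum hterm hgeom
    _ = u ^ n / n ! * (1 - u)⁻¹ := by rw [tsum_mul_left, tsum_geometric_of_lt_one hu0 hu1]

theorem chernoff_exponent_lt {t u : ℝ} (ht : 0 < t) (hu : u = t * (1 + t ^ 2)⁻¹) :
    -(t * u) / 2 + t ^ 2 * u ^ 2 / 8 + u ^ 2 / 4 + ∑' k : ℕ, u ^ (k + 4) / (k + 4)!
      < -(t ^ 2 / 4) * (1 + t ^ 2)⁻¹ := by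
  have hu0 : 0 < u := by rw [hu]; positivity
  have hut : u * (1 + t ^ 2) = t := by rw [hu]; field_simp
  have hu_lt_t : u < t := by nlinarith [mul_pos hu0 (pow_pos ht 2)]
  have hu_half : u ≤ 1 / 2 := by nlinarith [sq_nonneg (t - 1)]
  have htail : ∑' k : ℕ, u ^ (k + 4) / (k + 4)! ≤ u ^ 4 / 12 := by
    refine (tsum_pow_add_div_factorial_le hu0.le (by linarith) 4).trans ?_
    have hinv : (1 - u)⁻¹ ≤ 2 := by
      rw [inv_le_comm₀ (by linarith) two_pos]; linarith
    calc u ^ 4 / 4 ! * (1 - u)⁻¹ ≤ u ^ 4 / 4 ! * 2 := by gcongr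
      _ = u ^ 4 / 12 := by norm_num [factorial]; ring
  have hrhs : -(t ^ 2 / 4) * (1 + t ^ 2)⁻¹ = -(t * u) / 4 := by rw [hu]; ring
  have hu4 : u ^ 4 < t ^ 2 * u ^ 2 := by
    have := mul_lt_mul_of_pos_left (pow_lt_pow_left₀ hu_lt_t hu0.le two_ne_zero) (pow_pos hu0 2)
    linarith [show u ^ 4 = u ^ 2 * u ^ 2 by ring]
  have htu : t * u = u ^ 2 + t ^ 2 * u ^ 2 := by linear_combination (-u) * hut
  rw [hrhs]
  linarith [pow_pos hu0 4]

theorem stmt12_general (a : ℝ) (ha : 0 < a) (s : ℕ) (hs : 1 ≤ s)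
    (u : ℝ) (hu : u = (a / s) * (1 + a ^ 2 / (s : ℝ) ^ 2)⁻¹) :
    -a * u / (2 * s) + a ^ 2 * u ^ 2 / (8 * (s : ℝ) ^ 2) + u ^ 2 / 4 +
        ∑' k : ℕ, u ^ (k + 4) / (Nat.factorial (k + 4))
      < -(a ^ 2 / (4 * (s : ℝ) ^ 2)) * (1 + a ^ 2 / (s : ℝ) ^ 2)⁻¹ := by
  have hs0 : (0 : ℝ) < s := by exact_mod_cast hs
  have hsq : a ^ 2 / (s : ℝ) ^ 2 = (a / s) ^ 2 := (div_pow a _ 2).symm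
  rw [hsq] at hu ⊢
  convert chernoff_exponent_lt (div_pos ha hs0) hu using 3 <;> field_simp

/-- The optimization of the Chernoff exponent in variant V2: for `a ∈ (0,1]`,
`s ≥ 1` and `u = (a/s)(1 + a²/s²)⁻¹`,
`−au/(2s) + a²u²/(8s²) + u²/4 + ∑_{k≥4} uᵏ/k! < −(a²/(4s²))(1 + a²/s²)⁻¹`. -/
theorem stmt12 (a : ℝ) (ha : 0 < a) (ha1 : a ≤ 1) (s : ℕ) (hs : 1 ≤ s)
    (u : ℝ) (hu : u = (a / s) * (1 + a ^ 2 / (s : ℝ) ^ 2)⁻¹) :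
    -a * u / (2 * s) + a ^ 2 * u ^ 2 / (8 * (s : ℝ) ^ 2) + u ^ 2 / 4 +
        ∑' k : ℕ, u ^ (k + 4) / (Nat.factorial (k + 4))
      < -(a ^ 2 / (4 * (s : ℝ) ^ 2)) * (1 + a ^ 2 / (s : ℝ) ^ 2)⁻¹ :=
  stmt12_general a ha s hs u hu
end

section
/- Let Ω be a random subset of ℤ/Nℤ obtained by independent selection of each element with probability τ, where N is not divisible by 2 or 3, and let K(t) = ∑_{ω ∈ Ω} e^{2πiωt/N}. Then for each fixed t ≠ 0, each φ ∈ ℝ, and each s ≥ 1, with a = cos(π/ν) for an integer ν ≥ 3, P(Re(K(t)e^{−iφ}) ≥ (a/(2s))K(0)) ≤ exp(−τN a²/(4(s² + a²))). -/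
open MeasureTheory Finset

/-!
With `b = a / (2s) ≤ 1/2` and `θₙ = 2πnt/N - φ`, the event is `0 ≤ ∑ₙ Xₙ (cos θₙ - b)`.
The Chernoff bound at `λ = 2b`, independence and `1 + x ≤ eˣ` bound its probability by
`exp (τ ∑ₙ (e^{2b (cos θₙ - b)} - 1))`. As `6` is invertible modulo `N` and `t ≠ 0`,
`∑ₙ cos (k θₙ) = 0` for `k = 1, …, 4`, so the first four power sums of `cos θₙ` are
`0, N/2, 0, 3N/8`. A quartic polynomial bound for `exp` on `[-3/2, 3/2]` then gives
`∑ₙ e^{2b (cos θₙ - b)} ≤ N (1 - b²/(1 + 4b²))`, and `b²/(1 + 4b²) = a²/(4(s² + a²))`.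
-/

open ProbabilityTheory Real

lemma Real.exp_le_quartic_of_abs_le {x : ℝ} (hx : |x| ≤ 3 / 2) :
    exp x ≤ 1 + x + x ^ 2 / 2 + x ^ 3 / 6 + x ^ 4 / 12 := by
  -- Bound `exp (x / 2)` by its Taylor polynomial of degree 3 and square.
  set u := x / 2
  have hu : |u| ≤ 3 / 4 := by rw [abs_div, abs_two]; linarith
  have hexp_u : exp u ≤ 1 + u + u ^ 2 / 2 + u ^ 3 / 6 + 5 / 96 * u ^ 4 := by
    have h := (abs_sub_le_iff.1 (exp_bound (hu.trans (by norm_num)) (n := 4) (by norm_num))).1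
    simp only [sum_range_succ, sum_range_zero, Nat.factorial, ← abs_pow,
      abs_of_nonneg (by positivity : (0 : ℝ) ≤ u ^ 4)] at h
    norm_num at h
    linarith
  have hu2 : u ^ 2 ≤ 9 / 16 := by nlinarith [sq_abs u, abs_nonneg u]
  calc exp x = exp u ^ 2 := by rw [← exp_nat_mul]; congr 1; simp only [u]; push_cast; ring
    _ ≤ (1 + u + u ^ 2 / 2 + u ^ 3 / 6 + 5 / 96 * u ^ 4) ^ 2 :=
      pow_le_pow_left₀ (exp_pos u).le hexp_u 2
    _ ≤ 1 + x + x ^ 2 / 2 + x ^ 3 / 6 + x ^ 4 / 12 := by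
      rw [show x = 2 * u by simp only [u]; ring]
      nlinarith [sq_nonneg u, sq_nonneg (u ^ 2), sq_nonneg (u + u ^ 2), sq_nonneg (u - u ^ 2),
        sq_nonneg (u ^ 3), sq_nonneg (u ^ 2 - u ^ 3), sq_nonneg (u ^ 2 + u ^ 3),
        sq_nonneg (u * (1 - u)), mul_nonneg (mul_nonneg (sq_nonneg u) (sq_nonneg u)) (sq_nonneg u)]

lemma Real.cos_pi_div_pos {ν : ℝ} (hν : 2 < ν) : 0 < cos (π / ν) :=
  cos_pos_of_mem_Ioo ⟨by linarith [div_pos pi_pos (by linarith : 0 < ν), pi_pos],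
    div_lt_div_of_pos_left pi_pos two_pos hν⟩

section CosineMoments

variable {ι : Type*} [Fintype ι] (θ : ι → ℝ)

lemma sum_cos_sq_eq (h2 : ∑ i, cos (2 * θ i) = 0) :
    ∑ i, cos (θ i) ^ 2 = Fintype.card ι / 2 := by
  simp only [cos_sq, sum_add_distrib, ← sum_div, h2, sum_const, card_univ, nsmul_eq_mul]
  ring

lemma sum_cos_pow_three_eq_zero (h1 : ∑ i, cos (θ i) = 0) (h3 : ∑ i, cos (3 * θ i) = 0) :
    ∑ i, cos (θ i) ^ 3 = 0 := by
  have hcube : ∀ i, cos (θ i) ^ 3 = cos (3 * θ i) / 4 + 3 / 4 * cos (θ i) := fun i => by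
    rw [cos_three_mul]; ring
  simp only [hcube, sum_add_distrib, ← sum_div, ← mul_sum, h1, h3]
  ring

lemma sum_cos_pow_four_eq (h2 : ∑ i, cos (2 * θ i) = 0) (h4 : ∑ i, cos (4 * θ i) = 0) :
    ∑ i, cos (θ i) ^ 4 = 3 * Fintype.card ι / 8 := by
  have hquart : ∀ i, cos (θ i) ^ 4 = 3 / 8 + cos (2 * θ i) / 2 + cos (4 * θ i) / 8 := fun i => by
    have h := cos_sq (2 * θ i)
    rw [← mul_assoc, show (2 : ℝ) * 2 = 4 by norm_num] at h
    rw [show cos (θ i) ^ 4 = (cos (θ i) ^ 2) ^ 2 by ring, cos_sq]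
    linear_combination h / 4
  simp only [hquart, sum_add_distrib, ← sum_div, h2, h4, sum_const, card_univ, nsmul_eq_mul]
  ring

lemma sum_exp_two_mul_mul_cos_sub_le {b : ℝ} (hb : |b| ≤ 1 / 2)
    (h1 : ∑ i, cos (θ i) = 0) (h2 : ∑ i, cos (2 * θ i) = 0)
    (h3 : ∑ i, cos (3 * θ i) = 0) (h4 : ∑ i, cos (4 * θ i) = 0) :
    ∑ i, exp (2 * b * (cos (θ i) - b)) ≤ Fintype.card ι * (1 - b ^ 2 / (1 + 4 * b ^ 2)) := by
  have hb2 : b ^ 2 ≤ 1 / 4 := by nlinarith [sq_abs b, abs_nonneg b]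
  -- the quartic bound for `exp` at `2b (cos θᵢ - b)`, expanded in powers of `cos θᵢ`
  have hpoint : ∀ i, exp (2 * b * (cos (θ i) - b)) ≤
      (1 - 2 * b ^ 2 + 2 * b ^ 4 - 4 / 3 * b ^ 6 + 4 / 3 * b ^ 8)
        + (2 * b - 4 * b ^ 3 + 4 * b ^ 5 - 16 / 3 * b ^ 7) * cos (θ i)
        + (2 * b ^ 2 - 4 * b ^ 4 + 8 * b ^ 6) * cos (θ i) ^ 2
        + (4 / 3 * b ^ 3 - 16 / 3 * b ^ 5) * cos (θ i) ^ 3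
        + 4 / 3 * b ^ 4 * cos (θ i) ^ 4 := fun i => by
    refine (exp_le_quartic_of_abs_le ?_).trans_eq (by ring)
    have hc : |cos (θ i) - b| ≤ 1 + 1 / 2 :=
      (abs_sub _ _).trans (add_le_add (abs_cos_le_one _) hb)
    rw [abs_mul, abs_mul, abs_two]
    nlinarith [abs_nonneg b, abs_nonneg (cos (θ i) - b)]
  refine (sum_le_sum fun i _ => hpoint i).trans ?_
  simp only [sum_add_distrib, ← mul_sum, sum_const, card_univ, nsmul_eq_mul, h1,
    sum_cos_sq_eq θ h2, sum_cos_pow_three_eq_zero θ h1 h3, sum_cos_pow_four_eq θ h2 h4]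
  have hfrac : b ^ 2 / (1 + 4 * b ^ 2) ≤ b ^ 2 - 2 * b ^ 4 := by
    rw [div_le_iff₀ (by positivity)]
    nlinarith [pow_nonneg (sq_nonneg b) 2]
  have hb4 : 0 ≤ b ^ 4 := by positivity
  have hcoeff : 1 - b ^ 2 + b ^ 4 / 2 + 8 / 3 * b ^ 6 + 4 / 3 * b ^ 8
      ≤ 1 - b ^ 2 / (1 + 4 * b ^ 2) := by
    nlinarith [mul_le_mul_of_nonneg_left hb2 hb4, mul_le_mul_of_nonneg_left hb2 (by positivity :
      (0 : ℝ) ≤ b ^ 6)]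
  nlinarith [mul_le_mul_of_nonneg_left hcoeff (Nat.cast_nonneg (Fintype.card ι) : (0 : ℝ) ≤ _)]

end CosineMoments

lemma sum_cos_nat_mul_eq_zero {N : ℕ} [NeZero N] (t : ZMod N) (k : ℕ)
    (hk : (k : ZMod N) * t ≠ 0) (φ : ℝ) :
    ∑ n : ZMod N, cos (k * (2 * π * (n.val * t.val) / N - φ)) = 0 := by
  have hchar : ∑ n : ZMod N, ZMod.stdAddChar (n * ((k : ZMod N) * t)) = 0 := by
    classical
    simpa [hk] using AddChar.sum_mulShift (k * t) (ZMod.isPrimitive_stdAddChar N)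
  have hterm : ∀ n : ZMod N, cos (k * (2 * π * (n.val * t.val) / N - φ))
      = (Complex.exp (-(k * φ) * Complex.I) * ZMod.stdAddChar (n * ((k : ZMod N) * t))).re :=
      fun n => by
    rw [show n * (k * t) = ((n.val * (k * t.val) : ℕ) : ZMod N) by simp, ZMod.stdAddChar_apply,
      ZMod.toCircle_natCast, ← Complex.exp_add, ← Complex.exp_ofReal_mul_I_re]
    congr 2
    push_cast
    ring
  simp only [hterm, ← Complex.re_sum, ← mul_sum, hchar, mul_zero, Complex.zero_re]

lemma ZMod.natCast_mul_ne_zero {N k : ℕ} (hk : k.Coprime N) {t : ZMod N} (ht : t ≠ 0) :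
    (k : ZMod N) * t ≠ 0 :=
  fun h => ht (((ZMod.isUnit_iff_coprime k N).2 hk).mul_right_eq_zero.1 h)

lemma sum_exp_two_mul_mul_cos_sub_le_of_not_dvd {N : ℕ} [NeZero N] (hN2 : ¬ 2 ∣ N)
    (hN3 : ¬ 3 ∣ N) {t : ZMod N} (ht : t ≠ 0) (φ : ℝ) {b : ℝ} (hb : |b| ≤ 1 / 2) :
    ∑ n : ZMod N, exp (2 * b * (cos (2 * π * (n.val * t.val) / N - φ) - b))
      ≤ N * (1 - b ^ 2 / (1 + 4 * b ^ 2)) := by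
  set θ : ZMod N → ℝ := fun n => 2 * π * (n.val * t.val) / N - φ
  have hmoment : ∀ k : ℕ, k.Coprime N → ∑ n, cos (k * θ n) = 0 := fun k hk =>
    sum_cos_nat_mul_eq_zero t k (ZMod.natCast_mul_ne_zero hk ht) φ
  have h2 : Nat.Coprime 2 N := (Nat.Prime.coprime_iff_not_dvd Nat.prime_two).2 hN2
  have h3 : Nat.Coprime 3 N := (Nat.Prime.coprime_iff_not_dvd Nat.prime_three).2 hN3
  have hsum := sum_exp_two_mul_mul_cos_sub_le θ hb
    (by simpa using hmoment 1 (Nat.coprime_one_left N)) (by exact_mod_cast hmoment 2 h2)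
    (by exact_mod_cast hmoment 3 h3) (by exact_mod_cast hmoment 4 (h2.pow_left 2))
  rwa [ZMod.card] at hsum

lemma re_sum_mul_exp_mul_exp {N : ℕ} [NeZero N] (x : ZMod N → ℝ) (t : ZMod N) (φ : ℝ) :
    ((∑ n : ZMod N, (x n : ℂ) * Complex.exp (2 * π * Complex.I * (n.val * t.val) / N)) *
      Complex.exp (-Complex.I * φ)).re =
      ∑ n : ZMod N, x n * cos (2 * π * (n.val * t.val) / N - φ) := by
  simp only [sum_mul, Complex.re_sum, mul_assoc, ← Complex.exp_add]
  refine sum_congr rfl fun n _ => ?_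
  rw [← Complex.exp_ofReal_mul_I_re, Complex.re_ofReal_mul]
  congr 3
  push_cast
  ring

section Chernoff

variable {Ω : Type*} [MeasurableSpace Ω] {μ : Measure Ω}

lemma exp_mul_mul_eq_of_zero_or_one {x : ℝ} (hx : x = 0 ∨ x = 1) (t w : ℝ) :
    exp (t * (x * w)) = 1 + (exp (t * w) - 1) * x := by
  rcases hx with rfl | rfl <;> simp

lemma integrable_and_integral_eq_of_zero_or_one [IsProbabilityMeasure μ] {X : Ω → ℝ}
    (hX : Measurable X) (h01 : ∀ ω, X ω = 0 ∨ X ω = 1) {τ : ℝ} (hτ : 0 ≤ τ)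
    (h1 : μ {ω | X ω = 1} = ENNReal.ofReal τ) :
    Integrable X μ ∧ ∫ ω, X ω ∂μ = τ := by
  have hX_eq : X = {ω | X ω = 1}.indicator 1 := by
    ext ω
    rcases h01 ω with h | h <;> simp [h]
  have hmeas : MeasurableSet {ω | X ω = 1} := hX (measurableSet_singleton 1)
  rw [hX_eq]
  exact ⟨(integrable_const 1).indicator hmeas, by
    rw [integral_indicator_one hmeas, measureReal_def, h1, ENNReal.toReal_ofReal hτ]⟩

lemma measure_sum_mul_nonneg_le {ι : Type*} [Fintype ι] [IsProbabilityMeasure μ]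
    (X : ι → Ω → ℝ) (hX : ∀ i, Measurable (X i)) (h01 : ∀ i ω, X i ω = 0 ∨ X i ω = 1)
    {τ : ℝ} (hτ : 0 ≤ τ) (h1 : ∀ i, μ {ω | X i ω = 1} = ENNReal.ofReal τ)
    (hind : iIndepFun X μ) (w : ι → ℝ) {t : ℝ} (ht : 0 ≤ t) :
    μ {ω | 0 ≤ ∑ i, X i ω * w i} ≤ ENNReal.ofReal (exp (τ * ∑ i, (exp (t * w i) - 1))) := by
  set Z : ι → Ω → ℝ := fun i ω => X i ω * w i
  have hZ : ∀ i, Measurable (Z i) := fun i => (hX i).mul_const _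
  have hindZ : iIndepFun Z μ := hind.comp _ fun i => measurable_id.mul_const (w i)
  have hexpZ : ∀ i, (fun ω => exp (t * Z i ω)) = fun ω => 1 + (exp (t * w i) - 1) * X i ω :=
    fun i => funext fun ω => exp_mul_mul_eq_of_zero_or_one (h01 i ω) t (w i)
  have hXint : ∀ i, Integrable (X i) μ ∧ ∫ ω, X i ω ∂μ = τ :=
    fun i => integrable_and_integral_eq_of_zero_or_one (hX i) (h01 i) hτ (h1 i)
  have hZint : ∀ i, Integrable (fun ω => exp (t * Z i ω)) μ := fun i => by
    rw [hexpZ i]; exact (integrable_const 1).add ((hXint i).1.const_mul _)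
  have hmgf : ∀ i, mgf (Z i) μ t = 1 + (exp (t * w i) - 1) * τ := fun i => by
    rw [mgf, hexpZ i, integral_add (integrable_const 1) ((hXint i).1.const_mul _),
      integral_const_mul, (hXint i).2]
    simp
  have hchernoff := measure_ge_le_exp_mul_mgf (μ := μ) (X := ∑ i, Z i) 0 ht
    (hindZ.integrable_exp_mul_sum hZ fun i _ => hZint i)
  rw [hindZ.mgf_sum hZ, mul_zero, exp_zero, one_mul] at hchernoff
  have hset : {ω | 0 ≤ ∑ i, X i ω * w i} = {ω | 0 ≤ (∑ i, Z i) ω} := by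
    simp only [Z, Finset.sum_apply]
  rw [hset, ← ofReal_measureReal]
  refine ENNReal.ofReal_le_ofReal (hchernoff.trans ?_)
  rw [mul_sum, exp_sum]
  refine prod_le_prod (fun i _ => mgf_nonneg) fun i _ => ?_
  rw [hmgf i, mul_comm τ]
  linarith [add_one_le_exp ((exp (t * w i) - 1) * τ)]

end Chernoff

theorem stmt13_general {Ω' : Type*} [MeasurableSpace Ω'] (μ : Measure Ω') [IsProbabilityMeasure μ]
    (N : ℕ) [NeZero N] (hN2 : ¬ (2 ∣ N)) (hN3 : ¬ (3 ∣ N))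
    (τ : ℝ) (hτ0 : 0 ≤ τ)
    (X : ZMod N → Ω' → ℝ) (hX : ∀ n, Measurable (X n))
    (h01 : ∀ n ω', X n ω' = 0 ∨ X n ω' = 1)
    (h1 : ∀ n, μ {ω' | X n ω' = 1} = ENNReal.ofReal τ)
    (hind : ProbabilityTheory.iIndepFun X μ)
    (t : ZMod N) (ht : t ≠ 0) (φ : ℝ) (s : ℕ) (hs : 1 ≤ s)
    (ν : ℕ) (hν : 3 ≤ ν) (a : ℝ) (ha : a = Real.cos (Real.pi / ν)) :
    μ {ω' | (a / (2 * s)) * ∑ n : ZMod N, X n ω'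
          ≤ ((∑ n : ZMod N, (X n ω' : ℂ) *
                Complex.exp (2 * Real.pi * Complex.I * (n.val * t.val) / N)) *
              Complex.exp (-Complex.I * φ)).re}
      ≤ ENNReal.ofReal
          (Real.exp (-(τ * N) * a ^ 2 / (4 * ((s : ℝ) ^ 2 + a ^ 2)))) := by
  have hs1 : (1 : ℝ) ≤ s := by exact_mod_cast hs
  have ha0 : 0 < a := ha ▸ cos_pi_div_pos (by exact_mod_cast hν)
  set b := a / (2 * s) with hb_def
  have hb : |b| ≤ 1 / 2 := by
    rw [abs_of_pos (by positivity), div_le_iff₀ (by positivity)]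
    linarith [ha ▸ cos_le_one (π / ν)]
  set θ : ZMod N → ℝ := fun n => 2 * π * (n.val * t.val) / N - φ
  have hfrac : b ^ 2 / (1 + 4 * b ^ 2) = a ^ 2 / (4 * ((s : ℝ) ^ 2 + a ^ 2)) := by
    rw [hb_def]; field_simp; ring
  calc _ = μ {ω' | 0 ≤ ∑ n, X n ω' * (cos (θ n) - b)} := by
        congr 1; ext ω
        simp only [Set.mem_ofPred_eq, re_sum_mul_exp_mul_exp, mul_sub, sum_sub_distrib,
          ← sum_mul, sub_nonneg, mul_comm b]
        rfl
    _ ≤ ENNReal.ofReal (exp (τ * ∑ n, (exp (2 * b * (cos (θ n) - b)) - 1))) :=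
        measure_sum_mul_nonneg_le X hX h01 hτ0 h1 hind _ (by positivity)
    _ ≤ _ := by
        have hsum : ∑ n, exp (2 * b * (cos (θ n) - b)) ≤ N * (1 - b ^ 2 / (1 + 4 * b ^ 2)) :=
          sum_exp_two_mul_mul_cos_sub_le_of_not_dvd hN2 hN3 ht φ hb
        gcongr
        rw [sum_sub_distrib, sum_const, card_univ, ZMod.card, nsmul_eq_mul, mul_one]
        refine (mul_le_mul_of_nonneg_left (sub_le_sub_right hsum _) hτ0).trans_eq ?_
        rw [hfrac]
        ring

/-- Single-point probability bound of variant V2: for a random `Ω` given by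
i.i.d. Bernoulli(τ) selectors `Xₙ`, `K(t) = ∑ₙ Xₙ e^{2πint/N}`, `t ≠ 0`,
`a = cos(π/ν)` with `ν ≥ 3`, and `N` not divisible by 2 or 3,
`P(Re(K(t)e^{−iφ}) ≥ (a/(2s))K(0)) ≤ exp(−τN a²/(4(s² + a²)))`. -/
theorem stmt13 {Ω' : Type*} [MeasurableSpace Ω'] (μ : Measure Ω') [IsProbabilityMeasure μ]
    (N : ℕ) [NeZero N] (hN2 : ¬ (2 ∣ N)) (hN3 : ¬ (3 ∣ N))
    (τ : ℝ) (hτ0 : 0 ≤ τ) (hτ1 : τ ≤ 1)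
    (X : ZMod N → Ω' → ℝ) (hX : ∀ n, Measurable (X n))
    (h01 : ∀ n ω', X n ω' = 0 ∨ X n ω' = 1)
    (h1 : ∀ n, μ {ω' | X n ω' = 1} = ENNReal.ofReal τ)
    (hind : ProbabilityTheory.iIndepFun X μ)
    (t : ZMod N) (ht : t ≠ 0) (φ : ℝ) (s : ℕ) (hs : 1 ≤ s)
    (ν : ℕ) (hν : 3 ≤ ν) (a : ℝ) (ha : a = Real.cos (Real.pi / ν)) :
    μ {ω' | (a / (2 * s)) * ∑ n : ZMod N, X n ω'
          ≤ ((∑ n : ZMod N, (X n ω' : ℂ) *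
                Complex.exp (2 * Real.pi * Complex.I * (n.val * t.val) / N)) *
              Complex.exp (-Complex.I * φ)).re}
      ≤ ENNReal.ofReal
          (Real.exp (-(τ * N) * a ^ 2 / (4 * ((s : ℝ) ^ 2 + a ^ 2)))) :=
  stmt13_general μ N hN2 hN3 τ hτ0 X hX h01 h1 hind t ht φ s hs ν hν a ha
end

section
/- Let Ω be obtained by independent selection of each element of ℤ/Nℤ with probability τ, where N ≥ 2 is not divisible by 2 or 3, and let K(t) = ∑_{ω ∈ Ω} e^{2πiωt/N}. Fix s ≥ 1, an integer ν ≥ 3, and set a = cos(π/ν). If τN = 4C(s² + 1)log N with C > 1, then the probability that |K(t)| ≥ K(0)/(2s) for some t ≠ 0 is at most ν N^{1 − Ca²}, i.e. P(∀ t ≠ 0, |K(t)| < K(0)/(2s)) > 1 − ν N^{−(Ca² − 1)}. -/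
/-!
For fixed `t ≠ 0`, some rotation `e^{-2πik/ν}` (`k < ν`) brings `arg K(t)` within `π/ν` of `0`, so
`|K(t)| ≥ K(0)/(2s)` forces `∑ₙ (cos(2πnt/N - 2πk/ν) - b) Xₙ ≥ 0` with `b = a/(2s)`. This is a
deviation event for a weighted sum of independent Bernoulli variables. Since `t`, `2t`, `3t` are
nonzero mod `N`, the cosines have first and third moments `0` and second moment `N/2`, and the
Chernoff bound with multiplier `λ = 2b/(1+2b²)` and a fourth order Taylor expansion bounds its
probability by `exp(-τN b²/(1+4b²)) = exp(-τN a²/(4(s²+a²))) ≤ N^{-Ca²}`. A union bound over the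
`ν` rotations and the `N - 1` values of `t` concludes.
-/

open MeasureTheory Finset ProbabilityTheory Real
open Complex (I)

lemma re_exp_mul_exp_neg (θ φ : ℝ) :
    (Complex.exp (θ * I) * Complex.exp (-φ * I)).re = cos (θ - φ) := by
  rw [← Complex.exp_add, show (θ : ℂ) * I + -φ * I = ((θ - φ : ℝ) : ℂ) * I by push_cast; ring,
    Complex.exp_ofReal_mul_I_re]

lemma re_sum_mul_exp_mul_exp_neg {ι : Type*} (s : Finset ι) (x θ : ι → ℝ) (φ : ℝ) :
    ((∑ i ∈ s, (x i : ℂ) * Complex.exp (θ i * I)) * Complex.exp (-φ * I)).re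
      = ∑ i ∈ s, x i * cos (θ i - φ) := by
  simp_rw [Finset.sum_mul, Complex.re_sum, mul_assoc, Complex.re_ofReal_mul, re_exp_mul_exp_neg]

lemma re_mul_exp_neg (z : ℂ) (φ : ℝ) :
    (z * Complex.exp (-φ * I)).re = ‖z‖ * cos (Complex.arg z - φ) := by
  conv_lhs => rw [← Complex.norm_mul_exp_arg_mul_I z]
  rw [mul_assoc, Complex.re_ofReal_mul, re_exp_mul_exp_neg]

noncomputable def zmodPhase {N : ℕ} (t n : ZMod N) : ℝ := 2 * π * (n.val * t.val) / N

lemma exp_zmodPhase_mul_I {N : ℕ} (t n : ZMod N) :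
    Complex.exp (zmodPhase t n * I) = Complex.exp (2 * π * I * (n.val * t.val) / N) := by
  rw [zmodPhase]; push_cast; ring_nf

lemma natCast_mul_ne_zero_of_not_dvd {N j : ℕ} {t : ZMod N} (hj : j.Prime) (hjN : ¬ j ∣ N)
    (ht : t ≠ 0) :
    (j : ZMod N) * t ≠ 0 := by
  have hunit : IsUnit (j : ZMod N) :=
    (ZMod.isUnit_iff_coprime j N).mpr ((Nat.Prime.coprime_iff_not_dvd hj).mpr hjN)
  rwa [Ne, hunit.mul_right_eq_zero]

section CosineMoments

variable {N : ℕ} [NeZero N] {t : ZMod N}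

lemma sum_exp_natCast_mul_zmodPhase_eq_zero {j : ℕ} (hj : (j : ZMod N) * t ≠ 0) :
    ∑ n : ZMod N, Complex.exp ((j * zmodPhase t n : ℝ) * I) = 0 := by
  classical
  have hchar (n : ZMod N) :
      Complex.exp ((j * zmodPhase t n : ℝ) * I) = ZMod.stdAddChar (n * ((j : ZMod N) * t)) := by
    have hcast : ((j * (n.val * t.val) : ℕ) : ZMod N) = n * (j * t) := by
      push_cast; simp only [ZMod.natCast_val, ZMod.cast_id', id]; ring
    rw [ZMod.stdAddChar_apply, ← hcast, ZMod.toCircle_natCast, zmodPhase]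
    push_cast; ring_nf
  simp_rw [hchar, AddChar.sum_mulShift _ (ZMod.isPrimitive_stdAddChar N), if_neg hj, Nat.cast_zero]

lemma sum_cos_natCast_mul_zmodPhase_sub_eq_zero {j : ℕ} (hj : (j : ZMod N) * t ≠ 0) (φ : ℝ) :
    ∑ n : ZMod N, cos (j * (zmodPhase t n - φ)) = 0 := by
  have h := congrArg (fun z => (z * Complex.exp (-(j * φ : ℝ) * I)).re)
    (sum_exp_natCast_mul_zmodPhase_eq_zero hj)
  simp only [Finset.sum_mul, Complex.re_sum, re_exp_mul_exp_neg, zero_mul, Complex.zero_re] at h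
  simpa only [mul_sub] using h

lemma sum_cos_zmodPhase_sub (ht : t ≠ 0) (φ : ℝ) :
    ∑ n : ZMod N, cos (zmodPhase t n - φ) = 0 := by
  simpa using sum_cos_natCast_mul_zmodPhase_sub_eq_zero (j := 1) (by simpa using ht) φ

lemma sum_cos_zmodPhase_sub_sq (hN2 : ¬ 2 ∣ N) (ht : t ≠ 0) (φ : ℝ) :
    ∑ n : ZMod N, cos (zmodPhase t n - φ) ^ 2 = N / 2 := by
  have h2 := sum_cos_natCast_mul_zmodPhase_sub_eq_zero
    (natCast_mul_ne_zero_of_not_dvd Nat.prime_two hN2 ht) φ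
  push_cast at h2
  simp_rw [cos_sq, Finset.sum_add_distrib, ← Finset.sum_div, h2]
  simp [ZMod.card]

lemma sum_cos_zmodPhase_sub_pow_three (hN3 : ¬ 3 ∣ N) (ht : t ≠ 0) (φ : ℝ) :
    ∑ n : ZMod N, cos (zmodPhase t n - φ) ^ 3 = 0 := by
  have h3 := sum_cos_natCast_mul_zmodPhase_sub_eq_zero
    (natCast_mul_ne_zero_of_not_dvd Nat.prime_three hN3 ht) φ
  push_cast at h3
  have hcube (x : ℝ) : cos x ^ 3 = cos (3 * x) / 4 + 3 / 4 * cos x := by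
    rw [cos_three_mul]; ring
  simp_rw [hcube, Finset.sum_add_distrib, ← Finset.sum_div, ← Finset.mul_sum, h3,
    sum_cos_zmodPhase_sub ht]
  norm_num

end CosineMoments

lemma exists_cos_le_cos_sub_two_pi_mul_div (θ : ℝ) {ν : ℕ} (hν : 0 < ν) :
    ∃ k < ν, cos (π / ν) ≤ cos (θ - 2 * π * k / ν) := by
  have hν' : (0 : ℝ) < ν := by exact_mod_cast hν
  set m : ℤ := round (θ * ν / (2 * π))
  have hclose : |θ - 2 * π * m / ν| ≤ π / ν := by
    have h := abs_sub_round (θ * ν / (2 * π))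
    rw [show θ - 2 * π * m / ν = (θ * ν / (2 * π) - m) * (2 * π / ν) by field_simp,
      abs_mul, abs_of_pos (by positivity : 0 < 2 * π / ν)]
    calc |θ * ν / (2 * π) - m| * (2 * π / ν) ≤ 1 / 2 * (2 * π / ν) := by gcongr
      _ = π / ν := by ring
  have hπν : π / ν ≤ π := div_le_self pi_pos.le (by exact_mod_cast hν)
  refine ⟨(m % ν).toNat, by have := Int.emod_lt_of_pos m (by omega : (0 : ℤ) < ν); omega, ?_⟩
  have hperiod : cos (θ - 2 * π * (m % ν).toNat / ν) = cos (θ - 2 * π * m / ν) := by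
    have hk : (((m % ν).toNat : ℕ) : ℝ) = m - ν * (m / ν : ℤ) := by
      rw [← Int.cast_natCast, Int.toNat_of_nonneg (Int.emod_nonneg m (by omega)), Int.emod_def]
      push_cast; ring
    rw [hk, show θ - 2 * π * (m - ν * (m / ν : ℤ)) / ν = θ - 2 * π * m / ν + (m / ν : ℤ) * (2 * π)
      by field_simp; ring, cos_add_int_mul_two_pi]
  rw [hperiod, ← cos_abs (θ - _)]
  exact cos_le_cos_of_nonneg_of_le_pi (abs_nonneg _) hπν hclose

lemma exists_cos_pi_div_mul_norm_le_sum_mul_cos {ι : Type*} (s : Finset ι) (x θ : ι → ℝ)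
    {ν : ℕ} (hν : 0 < ν) :
    ∃ k < ν, cos (π / ν) * ‖∑ i ∈ s, (x i : ℂ) * Complex.exp (θ i * I)‖
      ≤ ∑ i ∈ s, x i * cos (θ i - 2 * π * k / ν) := by
  set z := ∑ i ∈ s, (x i : ℂ) * Complex.exp (θ i * I)
  obtain ⟨k, hk, hcos⟩ := exists_cos_le_cos_sub_two_pi_mul_div (Complex.arg z) hν
  refine ⟨k, hk, ?_⟩
  rw [← re_sum_mul_exp_mul_exp_neg, re_mul_exp_neg, mul_comm]
  exact mul_le_mul_of_nonneg_left hcos (norm_nonneg z)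

section Bernoulli

variable {Ω : Type*} [MeasurableSpace Ω] {μ : Measure Ω} [IsProbabilityMeasure μ] {τ : ℝ}

lemma mgf_of_forall_eq_zero_or_eq_one {Y : Ω → ℝ} (hY : Measurable Y)
    (h01 : ∀ ω, Y ω = 0 ∨ Y ω = 1) (hτ0 : 0 ≤ τ) (hτ : μ {ω | Y ω = 1} = ENNReal.ofReal τ)
    (c : ℝ) : mgf Y μ c = 1 + τ * (exp c - 1) := by
  have hS : MeasurableSet {ω | Y ω = 1} := hY (measurableSet_singleton 1)
  have hexp : (fun ω => exp (c * Y ω))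
      = fun ω => 1 + (exp c - 1) * {ω | Y ω = 1}.indicator 1 ω := by
    ext ω
    rcases h01 ω with h | h <;> simp [h, Set.indicator]
  rw [mgf, hexp,
    integral_add (integrable_const 1) (((integrable_const 1).indicator hS).const_mul _),
    integral_const_mul, integral_indicator_one hS, measureReal_def, hτ, ENNReal.toReal_ofReal hτ0]
  simp only [integral_const, probReal_univ, smul_eq_mul, mul_one]; ring

lemma mgf_le_exp_of_forall_eq_zero_or_eq_one {Y : Ω → ℝ} (hY : Measurable Y)
    (h01 : ∀ ω, Y ω = 0 ∨ Y ω = 1) (hτ0 : 0 ≤ τ) (hτ : μ {ω | Y ω = 1} = ENNReal.ofReal τ)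
    (c : ℝ) : mgf Y μ c ≤ exp (τ * (exp c - 1)) := by
  rw [mgf_of_forall_eq_zero_or_eq_one hY h01 hτ0 hτ, add_comm]
  exact add_one_le_exp _

lemma measureReal_sum_mul_nonneg_le {ι : Type*} [Fintype ι] {X : ι → Ω → ℝ}
    (hX : ∀ i, Measurable (X i)) (h01 : ∀ i ω, X i ω = 0 ∨ X i ω = 1) (hτ0 : 0 ≤ τ)
    (hτ : ∀ i, μ {ω | X i ω = 1} = ENNReal.ofReal τ) (hind : iIndepFun X μ)
    (c : ι → ℝ) {l : ℝ} (hl : 0 ≤ l) :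
    μ.real {ω | 0 ≤ ∑ i, c i * X i ω} ≤ exp (τ * ∑ i, (exp (l * c i) - 1)) := by
  set Y : ι → Ω → ℝ := fun i ω => c i * X i ω
  have hY : ∀ i, Measurable (Y i) := fun i => (hX i).const_mul _
  have hindY : iIndepFun Y μ := hind.comp (fun i x => c i * x) (fun i => measurable_const_mul _)
  have hint : Integrable (fun ω => exp (l * (∑ i, Y i) ω)) μ := by
    refine hindY.integrable_exp_mul_sum hY fun i _ => ?_
    refine integrable_exp_mul_of_mem_Icc (a := -|c i|) (b := |c i|) (hY i).aemeasurable
      (Filter.Eventually.of_forall fun ω => ?_)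
    rcases h01 i ω with h | h <;> simp [Y, h, neg_abs_le, le_abs_self]
  calc μ.real {ω | 0 ≤ ∑ i, c i * X i ω}
      ≤ exp (-l * 0) * mgf (∑ i, Y i) μ l := by
        simpa [Y, Finset.sum_apply] using measure_ge_le_exp_mul_mgf 0 hl hint
    _ = ∏ i, mgf (X i) μ (c i * l) := by
        simp only [mul_zero, exp_zero, one_mul, hindY.mgf_sum hY, Y, mgf_const_mul]
    _ ≤ ∏ i, exp (τ * (exp (c i * l) - 1)) :=
        prod_le_prod (fun _ _ => mgf_nonneg)
          fun i _ => mgf_le_exp_of_forall_eq_zero_or_eq_one (hX i) (h01 i) hτ0 (hτ i) _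
    _ = exp (τ * ∑ i, (exp (l * c i) - 1)) := by
        simp_rw [← exp_sum, Finset.mul_sum, mul_comm (c _) l]

end Bernoulli

lemma exp_le_taylor_three_add_quartic {y : ℝ} (hy : |y| ≤ 1) :
    exp y ≤ 1 + y + y ^ 2 / 2 + y ^ 3 / 6 + 5 / 96 * y ^ 4 := by
  have h := (abs_le.mp (Real.exp_bound hy (by norm_num : 0 < 4))).2
  rw [pow_abs, abs_of_nonneg (by positivity : 0 ≤ y ^ 4)] at h
  norm_num [Finset.sum_range_succ, Nat.factorial] at h
  linarith

-- `l` minimises the quadratic part `-l b + l² (1/2 + b²) / 2`, whose minimum is `-b² / (1 + 2b²)`;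
-- the cubic term absorbs the quartic remainder.
lemma taylor_bound_at_optimal_le {b l : ℝ} (hb0 : 0 < b) (hb : b ≤ 1 / 2)
    (hl : l = 2 * b / (1 + 2 * b ^ 2)) :
    -(l * b) + l ^ 2 / 2 * (1 / 2 + b ^ 2) - l ^ 3 / 6 * (3 * b / 2 + b ^ 3)
      + 5 / 96 * l ^ 4 * (1 + b) ^ 2 * (1 / 2 + b ^ 2) ≤ -(b ^ 2 / (1 + 4 * b ^ 2)) := by
  have hl0 : 0 < l := by rw [hl]; positivity
  have hl2b : l ≤ 2 * b := by
    rw [hl, div_le_iff₀ (by positivity)]; nlinarith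
  have hquad : -(l * b) + l ^ 2 / 2 * (1 / 2 + b ^ 2) = -(b ^ 2 / (1 + 2 * b ^ 2)) := by
    rw [hl]; field_simp; ring
  have hquartic : 5 / 96 * l * (1 + b) ^ 2 * (1 / 2 + b ^ 2) ≤ (3 * b / 2 + b ^ 3) / 6 := by
    have : 5 / 48 * ((1 + b) ^ 2 * (1 / 2 + b ^ 2)) ≤ 1 / 4 + b ^ 2 / 6 := by
      nlinarith [mul_pos hb0 hb0, mul_pos (mul_pos hb0 hb0) hb0]
    calc 5 / 96 * l * (1 + b) ^ 2 * (1 / 2 + b ^ 2)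
        ≤ 5 / 96 * (2 * b) * (1 + b) ^ 2 * (1 / 2 + b ^ 2) := by gcongr
      _ ≤ (3 * b / 2 + b ^ 3) / 6 := by nlinarith
  have hden : b ^ 2 / (1 + 4 * b ^ 2) ≤ b ^ 2 / (1 + 2 * b ^ 2) := by
    gcongr; nlinarith
  nlinarith [mul_le_mul_of_nonneg_left hquartic (by positivity : (0 : ℝ) ≤ l ^ 3)]

lemma sum_exp_sub_one_le {ι : Type*} [Fintype ι] (c : ι → ℝ) (hc : ∀ i, |c i| ≤ 1)
    (h1 : ∑ i, c i = 0) (h2 : ∑ i, c i ^ 2 = Fintype.card ι / 2) (h3 : ∑ i, c i ^ 3 = 0)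
    {b : ℝ} (hb0 : 0 < b) (hb : b ≤ 1 / 2) :
    ∑ i, (exp (2 * b / (1 + 2 * b ^ 2) * (c i - b)) - 1)
      ≤ -(Fintype.card ι * (b ^ 2 / (1 + 4 * b ^ 2))) := by
  set l := 2 * b / (1 + 2 * b ^ 2)
  set n : ℝ := (Fintype.card ι : ℝ)
  have hl0 : 0 < l := by positivity
  have hl1 : l * (1 + b) ≤ 1 := by
    rw [div_mul_eq_mul_div, div_le_one (by positivity)]; nlinarith
  have hterm (i : ι) : exp (l * (c i - b)) - 1
      ≤ l * (c i - b) + (l ^ 2 / 2 + 5 / 96 * l ^ 4 * (1 + b) ^ 2) * (c i - b) ^ 2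
        + l ^ 3 / 6 * (c i - b) ^ 3 := by
    have hcb : |c i - b| ≤ 1 + b := by
      have := hc i; rw [abs_le] at this ⊢; constructor <;> linarith
    have hsq : (c i - b) ^ 2 ≤ (1 + b) ^ 2 := sq_le_sq' (abs_le.mp hcb).1 (abs_le.mp hcb).2
    have hy : |l * (c i - b)| ≤ 1 := by
      rw [abs_mul, abs_of_pos hl0]
      exact (mul_le_mul_of_nonneg_left hcb hl0.le).trans hl1
    have h4 : l ^ 4 * (c i - b) ^ 4 ≤ l ^ 4 * ((1 + b) ^ 2 * (c i - b) ^ 2) := by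
      gcongr; nlinarith [sq_nonneg (c i - b)]
    nlinarith [exp_le_taylor_three_add_quartic hy]
  have hm1 : ∑ i, (c i - b) = -(n * b) := by
    simp [Finset.sum_sub_distrib, h1, n]
  have hm2 : ∑ i, (c i - b) ^ 2 = n * (1 / 2 + b ^ 2) := by
    simp_rw [sub_sq, Finset.sum_add_distrib, Finset.sum_sub_distrib, mul_assoc, ← Finset.mul_sum,
      ← Finset.sum_mul, h1, h2]
    simp only [zero_mul, mul_zero, sub_zero, sum_const, card_univ, nsmul_eq_mul, n]; ring
  have hm3 : ∑ i, (c i - b) ^ 3 = -(n * (3 * b / 2 + b ^ 3)) := by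
    have (x : ℝ) : (x - b) ^ 3 = x ^ 3 - 3 * b * x ^ 2 + 3 * b ^ 2 * x - b ^ 3 := by ring
    simp_rw [this, Finset.sum_sub_distrib, Finset.sum_add_distrib, Finset.sum_sub_distrib,
      ← Finset.mul_sum, h1, h2, h3]
    simp only [zero_sub, mul_zero, add_zero, sum_const, card_univ, nsmul_eq_mul, n]; ring
  calc ∑ i, (exp (l * (c i - b)) - 1)
      ≤ ∑ i, (l * (c i - b) + (l ^ 2 / 2 + 5 / 96 * l ^ 4 * (1 + b) ^ 2) * (c i - b) ^ 2
          + l ^ 3 / 6 * (c i - b) ^ 3) := Finset.sum_le_sum fun i _ => hterm i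
    _ = n * (-(l * b) + l ^ 2 / 2 * (1 / 2 + b ^ 2) - l ^ 3 / 6 * (3 * b / 2 + b ^ 3)
          + 5 / 96 * l ^ 4 * (1 + b) ^ 2 * (1 / 2 + b ^ 2)) := by
        simp only [Finset.sum_add_distrib, ← Finset.mul_sum, hm1, hm2, hm3]; ring
    _ ≤ -(n * (b ^ 2 / (1 + 4 * b ^ 2))) := by
        nlinarith [mul_le_mul_of_nonneg_left (taylor_bound_at_optimal_le hb0 hb rfl)
          (Nat.cast_nonneg (Fintype.card ι) : (0 : ℝ) ≤ n)]

lemma measure_sum_cos_zmodPhase_sub_mul_nonneg_le {Ω : Type*} [MeasurableSpace Ω]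
    {μ : Measure Ω} [IsProbabilityMeasure μ] {N : ℕ} [NeZero N] {τ : ℝ} {X : ZMod N → Ω → ℝ}
    (hX : ∀ n, Measurable (X n)) (h01 : ∀ n ω, X n ω = 0 ∨ X n ω = 1) (hτ0 : 0 ≤ τ)
    (hτ : ∀ n, μ {ω | X n ω = 1} = ENNReal.ofReal τ) (hind : iIndepFun X μ)
    (hN2 : ¬ 2 ∣ N) (hN3 : ¬ 3 ∣ N) {t : ZMod N} (ht : t ≠ 0) {b : ℝ} (hb0 : 0 < b)
    (hb : b ≤ 1 / 2) (φ : ℝ) :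
    μ {ω | 0 ≤ ∑ n, (cos (zmodPhase t n - φ) - b) * X n ω}
      ≤ ENNReal.ofReal (exp (-(τ * N * (b ^ 2 / (1 + 4 * b ^ 2))))) := by
  rw [← ofReal_measureReal]
  refine ENNReal.ofReal_le_ofReal ((measureReal_sum_mul_nonneg_le hX h01 hτ0 hτ hind _
    (by positivity : 0 ≤ 2 * b / (1 + 2 * b ^ 2))).trans (exp_le_exp.mpr ?_))
  have hsum := sum_exp_sub_one_le (fun n => cos (zmodPhase t n - φ)) (fun _ => abs_cos_le_one _)
    (sum_cos_zmodPhase_sub ht φ) (by rw [ZMod.card]; exact sum_cos_zmodPhase_sub_sq hN2 ht φ)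
    (sum_cos_zmodPhase_sub_pow_three hN3 ht φ) hb0 hb
  rw [ZMod.card] at hsum
  nlinarith [mul_le_mul_of_nonneg_left hsum hτ0]

lemma setOf_exists_le_norm_sum_subset {Ω : Type*} {N : ℕ} [NeZero N] (X : ZMod N → Ω → ℝ)
    {ν : ℕ} (hν : 2 ≤ ν) (r : ℝ) :
    {ω | ∃ t : ZMod N, t ≠ 0 ∧ (∑ n, X n ω) / r
        ≤ ‖∑ n, (X n ω : ℂ) * Complex.exp (2 * π * I * (n.val * t.val) / N)‖}
      ⊆ ⋃ t ∈ univ.erase 0, ⋃ k ∈ range ν,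
          {ω | 0 ≤ ∑ n, (cos (zmodPhase t n - 2 * π * k / ν) - cos (π / ν) / r) * X n ω} := by
  have hcos : 0 ≤ cos (π / ν) := by
    have : π / ν ≤ π / 2 := div_le_div_of_nonneg_left pi_pos.le two_pos (by exact_mod_cast hν)
    exact cos_nonneg_of_mem_Icc ⟨by linarith [pi_pos, (by positivity : 0 ≤ π / ν)], this⟩
  rintro ω ⟨t, ht, hK⟩
  obtain ⟨k, hk, hre⟩ :=
    exists_cos_pi_div_mul_norm_le_sum_mul_cos univ (X · ω) (zmodPhase t) (by omega : 0 < ν)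
  simp only [exp_zmodPhase_mul_I] at hre
  refine Set.mem_biUnion (mem_erase.mpr ⟨ht, mem_univ t⟩) (Set.mem_biUnion (mem_range.mpr hk) ?_)
  have : cos (π / ν) / r * ∑ n, X n ω ≤ ∑ n, X n ω * cos (zmodPhase t n - 2 * π * k / ν) :=
    calc cos (π / ν) / r * ∑ n, X n ω = cos (π / ν) * ((∑ n, X n ω) / r) := by ring
      _ ≤ _ := by gcongr
      _ ≤ _ := hre
  simp only [Set.mem_ofPred_eq, sub_mul, sum_sub_distrib, ← mul_sum]
  simp only [mul_comm (X _ ω)] at this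
  linarith

lemma measure_biUnion_biUnion_le {Ω ι κ : Type*} [MeasurableSpace Ω] (μ : Measure Ω)
    (s : Finset ι) (t : Finset κ) (A : ι → κ → Set Ω) {p : ENNReal}
    (h : ∀ i ∈ s, ∀ k ∈ t, μ (A i k) ≤ p) :
    μ (⋃ i ∈ s, ⋃ k ∈ t, A i k) ≤ #s * (#t * p) := by
  calc μ (⋃ i ∈ s, ⋃ k ∈ t, A i k) ≤ ∑ i ∈ s, ∑ k ∈ t, μ (A i k) :=
        (measure_biUnion_finset_le _ _).trans (sum_le_sum fun _ _ => measure_biUnion_finset_le _ _)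
    _ ≤ ∑ i ∈ s, ∑ k ∈ t, p := sum_le_sum fun i hi => sum_le_sum fun k hk => h i hi k hk
    _ = #s * (#t * p) := by simp only [sum_const, nsmul_eq_mul]

lemma mul_sq_mul_le_mul_div {x C L s a : ℝ} (hx : 0 ≤ x) (hs : 0 < s) (ha : a ^ 2 ≤ 1)
    (hxL : x = 4 * C * (s ^ 2 + 1) * L) :
    C * a ^ 2 * L ≤ x * ((a / (2 * s)) ^ 2 / (1 + 4 * (a / (2 * s)) ^ 2)) := by
  calc C * a ^ 2 * L = x * (a ^ 2 / (4 * (s ^ 2 + 1))) := by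
        rw [hxL]; field_simp
    _ ≤ x * (a ^ 2 / (4 * (s ^ 2 + a ^ 2))) := by gcongr
    _ = x * ((a / (2 * s)) ^ 2 / (1 + 4 * (a / (2 * s)) ^ 2)) := by field_simp; ring

theorem stmt14_general {Ω' : Type*} [MeasurableSpace Ω'] (μ : Measure Ω') [IsProbabilityMeasure μ]
    (N : ℕ) [NeZero N] (hN2 : ¬ (2 ∣ N)) (hN3 : ¬ (3 ∣ N))
    (τ : ℝ) (hτ0 : 0 ≤ τ)
    (X : ZMod N → Ω' → ℝ) (hX : ∀ n, Measurable (X n))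
    (h01 : ∀ n ω', X n ω' = 0 ∨ X n ω' = 1)
    (h1 : ∀ n, μ {ω' | X n ω' = 1} = ENNReal.ofReal τ)
    (hind : ProbabilityTheory.iIndepFun X μ)
    (s : ℕ) (hs : 1 ≤ s) (ν : ℕ) (hν : 3 ≤ ν) (a : ℝ) (ha : a = Real.cos (Real.pi / ν))
    (C : ℝ) (hτN : τ * N = 4 * C * ((s : ℝ) ^ 2 + 1) * Real.log N) :
    μ {ω' | ∃ t : ZMod N, t ≠ 0 ∧
          (∑ n : ZMod N, X n ω') / (2 * s)
            ≤ ‖∑ n : ZMod N, (X n ω' : ℂ) *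
                Complex.exp (2 * Real.pi * Complex.I * (n.val * t.val) / N)‖}
      ≤ ENNReal.ofReal ((ν : ℝ) * (N : ℝ) ^ ((1 : ℝ) - C * a ^ 2)) := by
  have hNpos : (0 : ℝ) < N := Nat.cast_pos.mpr (NeZero.pos N)
  have hs1 : (1 : ℝ) ≤ s := by exact_mod_cast hs
  have ha1 : a ≤ 1 := ha ▸ cos_le_one _
  have ha0 : 0 < a := by
    have : π / ν ≤ π / 3 := div_le_div_of_nonneg_left pi_pos.le (by norm_num) (by exact_mod_cast hν)
    exact ha ▸ cos_pos_of_mem_Ioo ⟨by linarith [(by positivity : 0 < π / ν)], by linarith [pi_pos]⟩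
  have hb : a / (2 * s) ≤ 1 / 2 := by rw [div_le_iff₀ (by positivity)]; nlinarith
  have hexponent := mul_sq_mul_le_mul_div (a := a) (by positivity) (by linarith) (by nlinarith) hτN
  calc _ ≤ _ := measure_mono (ha ▸ setOf_exists_le_norm_sum_subset X (by omega) (2 * s))
    _ ≤ #(univ.erase (0 : ZMod N)) * (#(range ν) * ENNReal.ofReal ((N : ℝ) ^ (-(C * a ^ 2)))) := by
        refine measure_biUnion_biUnion_le μ _ _ _ fun t ht k _ => ?_
        refine (measure_sum_cos_zmodPhase_sub_mul_nonneg_le hX h01 hτ0 h1 hind hN2 hN3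
          (mem_erase.mp ht).1 (by positivity) hb _).trans (ENNReal.ofReal_le_ofReal ?_)
        rw [rpow_def_of_pos hNpos, exp_le_exp]
        linarith
    _ ≤ ENNReal.ofReal ((ν : ℝ) * (N : ℝ) ^ ((1 : ℝ) - C * a ^ 2)) := by
        rw [card_erase_of_mem (mem_univ _), card_univ, ZMod.card, card_range,
          ← ENNReal.ofReal_natCast, ← ENNReal.ofReal_natCast, ← ENNReal.ofReal_mul (by positivity),
          ← ENNReal.ofReal_mul (by positivity)]
        refine ENNReal.ofReal_le_ofReal ?_
        rw [sub_eq_add_neg, rpow_add hNpos, rpow_one]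
        calc ((N - 1 : ℕ) : ℝ) * (ν * (N : ℝ) ^ (-(C * a ^ 2)))
            ≤ N * (ν * (N : ℝ) ^ (-(C * a ^ 2))) := by gcongr; exact_mod_cast N.sub_le 1
          _ = _ := by ring

/-- Variant V2: with `Ω` given by i.i.d. Bernoulli(τ) selectors,
`K(t) = ∑ₙ Xₙ e^{2πint/N}`, `τN = 4C(s²+1)log N` with `C > 1`, `a = cos(π/ν)`
for `ν ≥ 3`, and `N ≥ 2` not divisible by 2 or 3, the probability that
`|K(t)| ≥ K(0)/(2s)` for some `t ≠ 0` is at most `ν N^{1−Ca²}`. -/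
theorem stmt14 {Ω' : Type*} [MeasurableSpace Ω'] (μ : Measure Ω') [IsProbabilityMeasure μ]
    (N : ℕ) (hN : 2 ≤ N) [NeZero N] (hN2 : ¬ (2 ∣ N)) (hN3 : ¬ (3 ∣ N))
    (τ : ℝ) (hτ0 : 0 ≤ τ) (hτ1 : τ ≤ 1)
    (X : ZMod N → Ω' → ℝ) (hX : ∀ n, Measurable (X n))
    (h01 : ∀ n ω', X n ω' = 0 ∨ X n ω' = 1)
    (h1 : ∀ n, μ {ω' | X n ω' = 1} = ENNReal.ofReal τ)
    (hind : ProbabilityTheory.iIndepFun X μ)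
    (s : ℕ) (hs : 1 ≤ s) (ν : ℕ) (hν : 3 ≤ ν) (a : ℝ) (ha : a = Real.cos (Real.pi / ν))
    (C : ℝ) (hC : 1 < C) (hτN : τ * N = 4 * C * ((s : ℝ) ^ 2 + 1) * Real.log N) :
    μ {ω' | ∃ t : ZMod N, t ≠ 0 ∧
          (∑ n : ZMod N, X n ω') / (2 * s)
            ≤ ‖∑ n : ZMod N, (X n ω' : ℂ) *
                Complex.exp (2 * Real.pi * Complex.I * (n.val * t.val) / N)‖}
      ≤ ENNReal.ofReal ((ν : ℝ) * (N : ℝ) ^ ((1 : ℝ) - C * a ^ 2)) :=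
  stmt14_general μ N hN2 hN3 τ hτ0 X hX h01 h1 hind s hs ν hν a ha C hτN
end

section
/- Let S ⊆ ℤ/Nℤ with |S| = s, t ∈ ℤ/Nℤ, and for each t' ∈ S∖{t} let ψ(t') ∈ ℝ and φ ∈ ℝ. Set Dₙ = ∑_{t' ∈ S∖{t}} cos(2πn(t−t')/N + ψ(t') − φ) and let M = (1/N)∑_{n ∈ ℤ/Nℤ}. Then M(Dₙ) = 0 and M(Dₙᵏ) ≤ (s−1)^{k−1} for all k ≥ 2. -/
/-!
Writing each cosine as `(e^{iθ} + e^{-iθ}) / 2` turns `Dₙ` into a combination of the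
`2(s - 1)` characters `n ↦ e^{2πi n ξ / N}` with nonzero frequencies `ξ = ±(t - t')` and weights
of modulus `1/2`. Averaging over `n` kills every character of nonzero frequency, so `M(Dₙ) = 0`,
and `M(Dₙᵏ)` is the sum of the products of weights over the `k`-tuples of frequencies with sum
`0`. Such a tuple is determined by its first `k - 1` entries up to the at most two indices
realising the last frequency, so there are at most `2 (2(s - 1))^(k-1)` of them, each
contributing at most `2^(-k)`.
-/

open Finset

lemma AddChar.map_sum_eq_prod {A M ι : Type*} [AddCommMonoid A] [CommMonoid M] (ψ : AddChar A M)
    (s : Finset ι) (f : ι → A) : ψ (∑ i ∈ s, f i) = ∏ i ∈ s, ψ (f i) := by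
  have h := map_prod ψ.toMonoidHom (fun i => Multiplicative.ofAdd (f i)) s
  rwa [← ofAdd_sum, AddChar.toMonoidHom_apply, toAdd_ofAdd] at h

theorem Finset.card_filter_piFinset_sum_eq_le {ι G : Type*} [AddCommGroup G] [DecidableEq G]
    (Q : Finset ι) (f : ι → G) (r : ℕ) (hr : ∀ v, #{q ∈ Q | f q = v} ≤ r) (m : ℕ) (c : G) :
    #{p ∈ Fintype.piFinset (fun _ : Fin (m + 1) => Q) | ∑ i, f (p i) = c} ≤ #Q ^ m * r := by
  classical
  set P := {p ∈ Fintype.piFinset (fun _ : Fin (m + 1) => Q) | ∑ i, f (p i) = c}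
  have hinit : ∀ p ∈ P, Fin.init p ∈ Fintype.piFinset (fun _ : Fin m => Q) := fun p hp =>
    Fintype.mem_piFinset.2 fun j => Fintype.mem_piFinset.1 (mem_filter.1 hp).1 j.castSucc
  -- a tuple with prescribed sum is determined, up to the fibre of `f`, by its first `m` entries
  have hfibre : ∀ a ∈ Fintype.piFinset (fun _ : Fin m => Q), #{p ∈ P | Fin.init p = a} ≤ r := by
    intro a _
    refine (card_le_card_of_injOn (fun p => p (Fin.last m)) ?_ ?_).trans
      (hr (c - ∑ j, f (a j)))
    · intro p hp
      obtain ⟨hpP, rfl⟩ := mem_filter.1 hp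
      obtain ⟨hpQ, hsum⟩ := mem_filter.1 hpP
      refine mem_filter.2 ⟨Fintype.mem_piFinset.1 hpQ _, ?_⟩
      rw [Fin.sum_univ_castSucc] at hsum
      rw [← hsum]
      simp [Fin.init]
    · intro p hp p' hp' hlast
      rw [← Fin.snoc_init_self p, ← Fin.snoc_init_self p', (mem_filter.1 hp).2,
        (mem_filter.1 hp').2]
      exact congrArg _ hlast
  calc #P ≤ r * #(Fintype.piFinset fun _ : Fin m => Q) :=
        card_le_mul_card_image_of_maps_to hinit r hfibre
    _ = #Q ^ m * r := by rw [Fintype.card_piFinset_const, mul_comm]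

namespace ZMod

variable {N : ℕ} [NeZero N] {ι : Type*}

noncomputable def trigSum (Q : Finset ι) (f : ι → ZMod N) (w : ι → ℂ) (n : ZMod N) : ℂ :=
  ∑ q ∈ Q, w q * stdAddChar (n * f q)

lemma sum_stdAddChar_mul (a : ZMod N) :
    ∑ n : ZMod N, stdAddChar (n * a) = if a = 0 then (N : ℂ) else 0 := by
  rw [AddChar.sum_mulShift a (isPrimitive_stdAddChar N), ZMod.card, Nat.cast_ite, Nat.cast_zero]

lemma sum_trigSum_eq_zero (Q : Finset ι) (f : ι → ZMod N) (w : ι → ℂ) (hf : ∀ q ∈ Q, f q ≠ 0) :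
    ∑ n, trigSum Q f w n = 0 := by
  simp only [trigSum]
  rw [sum_comm]
  refine sum_eq_zero fun q hq => ?_
  rw [← mul_sum, sum_stdAddChar_mul, if_neg (hf q hq), mul_zero]

lemma trigSum_pow (Q : Finset ι) (f : ι → ZMod N) (w : ι → ℂ) (k : ℕ) (n : ZMod N) :
    trigSum Q f w n ^ k = ∑ p ∈ Fintype.piFinset (fun _ : Fin k => Q),
      (∏ i, w (p i)) * stdAddChar (n * ∑ i, f (p i)) := by
  rw [trigSum, ← Fin.prod_const, prod_univ_sum]
  refine sum_congr rfl fun p _ => ?_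
  rw [prod_mul_distrib, mul_sum, AddChar.map_sum_eq_prod]

lemma sum_trigSum_pow (Q : Finset ι) (f : ι → ZMod N) (w : ι → ℂ) (k : ℕ) :
    ∑ n, trigSum Q f w n ^ k =
      N * ∑ p ∈ Fintype.piFinset (fun _ : Fin k => Q) with ∑ i, f (p i) = 0, ∏ i, w (p i) := by
  simp_rw [trigSum_pow]
  rw [sum_comm, sum_filter, mul_sum]
  refine sum_congr rfl fun p _ => ?_
  rw [← mul_sum, sum_stdAddChar_mul]
  split_ifs <;> ring

lemma norm_average_trigSum_pow_le (Q : Finset ι) (f : ι → ZMod N) (w : ι → ℂ) {B : ℝ}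
    (hw : ∀ q ∈ Q, ‖w q‖ ≤ B) (k : ℕ) :
    ‖(1 / N : ℂ) * ∑ n, trigSum Q f w n ^ k‖ ≤
      #{p ∈ Fintype.piFinset (fun _ : Fin k => Q) | ∑ i, f (p i) = 0} * B ^ k := by
  have hN : (N : ℂ) ≠ 0 := Nat.cast_ne_zero.2 (NeZero.ne N)
  rw [sum_trigSum_pow, one_div, inv_mul_cancel_left₀ hN, ← nsmul_eq_mul, ← sum_const]
  refine (norm_sum_le _ _).trans (sum_le_sum fun p hp => ?_)
  rw [norm_prod, ← Fin.prod_const]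
  have hpQ := Fintype.mem_piFinset.1 (mem_filter.1 hp).1
  exact prod_le_prod (fun i _ => norm_nonneg _) fun i _ => hw _ (hpQ i)

/-- With `cosWeight`, encodes `cos θₐ = (e^{iθₐ} + e^{-iθₐ}) / 2`: the index `(a, true)` stands for
`e^{iθₐ}`, the index `(a, false)` for `e^{-iθₐ}`. -/
def signedFreq {G : Type*} [Neg G] (x : ι → G) (q : ι × Bool) : G :=
  if q.2 then x q.1 else -x q.1

noncomputable def cosWeight (c : ι → ℝ) (q : ι × Bool) : ℂ :=
  1 / 2 * Complex.exp (↑(if q.2 then c q.1 else -c q.1) * Complex.I)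

lemma norm_cosWeight (c : ι → ℝ) (q : ι × Bool) : ‖cosWeight c q‖ = 1 / 2 := by
  rw [cosWeight, norm_mul, Complex.norm_exp_ofReal_mul_I, mul_one, norm_div, norm_one,
    Complex.norm_two]

lemma card_filter_signedFreq_eq_le {G : Type*} [AddGroup G] [DecidableEq G] (A : Finset ι)
    {x : ι → G} (hx : Set.InjOn x A) (v : G) :
    #{q ∈ A ×ˢ (univ : Finset Bool) | signedFreq x q = v} ≤ 2 := by
  refine (card_le_card_of_injOn Prod.snd (fun _ _ => mem_coe.2 (mem_univ _)) ?_).trans_eq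
    Fintype.card_bool
  rintro ⟨a, b⟩ h ⟨a', b'⟩ h' (rfl : b = b')
  rw [mem_coe, mem_filter, mem_product] at h h'
  have hxa : x a = x a' := by
    have := h.2.trans h'.2.symm
    cases b <;> simpa [signedFreq] using this
  exact Prod.ext (hx h.1.1 h'.1.1 hxa) rfl

lemma stdAddChar_mul_eq_exp (n x : ZMod N) :
    stdAddChar (n * x) = Complex.exp (2 * Real.pi * n.val * x.val / N * Complex.I) := by
  have : n * x = ((n.val * x.val : ℕ) : ℤ) := by push_cast [natCast_zmod_val]; rfl
  rw [this, stdAddChar_coe]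
  push_cast
  ring_nf

lemma ofReal_cos_eq_stdAddChar (n x : ZMod N) (c : ℝ) :
    (Real.cos (2 * Real.pi * n.val * x.val / N + c) : ℂ) =
      1 / 2 * Complex.exp (c * Complex.I) * stdAddChar (n * x) +
        1 / 2 * Complex.exp (↑(-c) * Complex.I) * stdAddChar (n * -x) := by
  rw [mul_neg, AddChar.map_neg_eq_inv, stdAddChar_mul_eq_exp, ← Complex.exp_neg,
    mul_assoc (1 / 2 : ℂ), mul_assoc (1 / 2 : ℂ), ← Complex.exp_add, ← Complex.exp_add,
    Complex.ofReal_cos, Complex.cos]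
  push_cast
  ring_nf

lemma ofReal_sum_cos_eq_trigSum (A : Finset ι) (x : ι → ZMod N) (c : ι → ℝ) (n : ZMod N) :
    ((∑ a ∈ A, Real.cos (2 * Real.pi * n.val * (x a).val / N + c a) : ℝ) : ℂ) =
      trigSum (A ×ˢ univ) (signedFreq x) (cosWeight c) n := by
  rw [trigSum, sum_product, Complex.ofReal_sum]
  refine sum_congr rfl fun a _ => ?_
  rw [ofReal_cos_eq_stdAddChar, Fintype.sum_bool]
  rfl

end ZMod

/-- Combinatorial moment bound of variant V3: with
`Dₙ = ∑_{t' ∈ S∖{t}} cos(2πn(t−t')/N + ψ(t') − φ)` and `M` the average over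
`n ∈ ℤ/Nℤ`, one has `M(Dₙ) = 0` and `M(Dₙᵏ) ≤ (s−1)^{k−1}` for `k ≥ 2`. -/
theorem stmt17 (N : ℕ) [NeZero N] (S : Finset (ZMod N)) (s : ℕ) (hS : S.card = s)
    (t : ZMod N) (ht : t ∈ S) (ψ : ZMod N → ℝ) (φ : ℝ) :
    let D : ZMod N → ℝ := fun n =>
      ∑ t' ∈ S.erase t, Real.cos (2 * Real.pi * n.val * (t - t').val / N + ψ t' - φ)
    ((1 : ℝ) / N) * ∑ n : ZMod N, D n = 0 ∧
    ∀ k : ℕ, 2 ≤ k →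
      ((1 : ℝ) / N) * ∑ n : ZMod N, (D n) ^ k ≤ ((s : ℝ) - 1) ^ (k - 1) := by
  intro D
  set Q := S.erase t ×ˢ (univ : Finset Bool)
  set F := ZMod.trigSum Q (ZMod.signedFreq (t - ·)) (ZMod.cosWeight (ψ · - φ))
  have hDF : ∀ n, (D n : ℂ) = F n := fun n => by
    simp only [D, F, Q, add_sub_assoc, ZMod.ofReal_sum_cos_eq_trigSum]
  have hfreq : ∀ q ∈ Q, ZMod.signedFreq (t - ·) q ≠ 0 := by
    rintro ⟨a, b⟩ hq
    have hat : t - a ≠ 0 := sub_ne_zero.2 (ne_of_mem_erase (mem_product.1 hq).1).symm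
    cases b
    · exact neg_ne_zero.2 hat
    · exact hat
  refine ⟨?_, fun k _ => ?_⟩
  · have hsum : ∑ n, (D n : ℂ) = 0 := by
      simp_rw [hDF]
      exact ZMod.sum_trigSum_eq_zero Q _ _ hfreq
    rw [← Complex.ofReal_sum, Complex.ofReal_eq_zero] at hsum
    rw [hsum, mul_zero]
  obtain ⟨m, rfl⟩ : ∃ m, k = m + 1 := ⟨k - 1, by omega⟩
  have hcount := card_filter_piFinset_sum_eq_le Q (ZMod.signedFreq (t - ·)) 2
    (ZMod.card_filter_signedFreq_eq_le _ (sub_right_injective (b := t)).injOn) m 0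
  have hQ : (#Q : ℝ) = 2 * (s - 1) := by
    rw [card_product, card_erase_of_mem ht, hS, card_univ, Fintype.card_bool,
      Nat.cast_mul, Nat.cast_sub (hS ▸ card_pos.2 ⟨t, ht⟩)]
    push_cast
    ring
  calc ((1 : ℝ) / N) * ∑ n, D n ^ (m + 1)
      ≤ ‖(1 / N : ℂ) * ∑ n, F n ^ (m + 1)‖ := by
        have hcast : (((1 : ℝ) / N * ∑ n, D n ^ (m + 1) : ℝ) : ℂ) =
            (1 / N : ℂ) * ∑ n, F n ^ (m + 1) := by
          push_cast [hDF]
          rfl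
        rw [← hcast, Complex.norm_real]
        exact Real.le_norm_self _
    _ ≤ #Q ^ m * 2 * (1 / 2) ^ (m + 1) := by
        refine (ZMod.norm_average_trigSum_pow_le Q _ _
          (fun q _ => (ZMod.norm_cosWeight _ q).le) (m + 1)).trans ?_
        gcongr
        exact_mod_cast hcount
    _ = ((s : ℝ) - 1) ^ (m + 1 - 1) := by
        rw [hQ, Nat.add_sub_cancel, mul_pow, pow_succ, one_div, inv_pow]
        field_simp
end
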